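/- arXiv:2012.01808 — 2 statements merged into one kernel-verified Lean document; each statement's English description precedes it below -/
import Mathlib

section
/- Let f be a real square matrix such that f^d − Id is invertible for all positive integers d, and suppose all real eigenvalues of f lie in (−∞, −1) ∪ (−1, 1) ∪ (1, ∞). Let m₁ be the number of real eigenvalues of f (with multiplicity) in (−∞, 1), and m₂ the number of real eigenvalues in (−1, 1). Then sign(det(f^d − Id)) = (−1)^{m₁} for all odd d, and sign(det(f^d − Id)) = (−1)^{m₂} for all even d. -/
/-!
Over `ℂ`, `det (f ^ d - 1) = ∏ (μ ^ d - 1)` over the eigenvalues `μ` of `f` counted with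
multiplicity. The non-real eigenvalues of a real matrix come in conjugate pairs `μ, μ̄`, whose
factors multiply to `|μ ^ d - 1| ^ 2 ≥ 0`; this part is nonzero because `f ^ d - 1` is invertible.
So the sign of the determinant is the sign of `∏ (x ^ d - 1)` over the real eigenvalues `x`, and a
factor `x ^ d - 1` is negative exactly when `x < 1` (`d` odd), resp. `|x| < 1` (`d` even).
-/

open Polynomial ComplexConjugate

theorem Real.sign_eq_coe_sign (r : ℝ) : Real.sign r = (SignType.sign r : ℝ) := by
  rcases lt_trichotomy r 0 with h | rfl | h
  · simp [Real.sign_of_neg h, h]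
  · simp [Real.sign_zero]
  · simp [Real.sign_of_pos h, h]

theorem Real.sign_mul (x y : ℝ) : Real.sign (x * y) = Real.sign x * Real.sign y := by
  rw [Real.sign_eq_coe_sign, Real.sign_eq_coe_sign, Real.sign_eq_coe_sign, _root_.sign_mul,
    SignType.coe_mul]

theorem Real.sign_multiset_prod_map {α : Type*} (s : Multiset α) (g : α → ℝ)
    (hg : ∀ a ∈ s, g a ≠ 0) :
    Real.sign (s.map g).prod = (-1) ^ (s.filter (g · < 0)).card := by
  induction s using Multiset.induction_on with
  | empty => simp [Real.sign_one]
  | cons a s ih =>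
    rw [Multiset.map_cons, Multiset.prod_cons, Real.sign_mul,
      ih fun b hb => hg b (Multiset.mem_cons_of_mem hb), Multiset.filter_cons]
    rcases (hg a (Multiset.mem_cons_self a s)).lt_or_gt with h | h
    · simp [Real.sign_of_neg h, h, pow_succ, mul_comm]
    · simp [Real.sign_of_pos h, h.not_gt]

section LinearOrderedRing

variable {R : Type*} [Ring R] [LinearOrder R] [IsStrictOrderedRing R]

theorem Odd.pow_lt_one_iff {x : R} {d : ℕ} (hd : Odd d) : x ^ d < 1 ↔ x < 1 := by
  simpa using hd.strictMono_pow.lt_iff_lt (a := x) (b := 1)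

theorem Even.pow_lt_one_iff {x : R} {d : ℕ} (hd : Even d) (hd0 : d ≠ 0) :
    x ^ d < 1 ↔ -1 < x ∧ x < 1 := by
  rw [← hd.pow_abs, pow_lt_one_iff_of_nonneg (abs_nonneg x) hd0, abs_lt]

end LinearOrderedRing

namespace Matrix

variable {n K : Type*} [Fintype n] [DecidableEq n] [Field K] [IsAlgClosed K]

theorem card_roots_charpoly (A : Matrix n n K) : A.charpoly.roots.card = Fintype.card n := by
  rw [IsAlgClosed.card_roots_eq_natDegree, charpoly_natDegree_eq_dim]

theorem det_sub_scalar_eq_prod_roots_charpoly (A : Matrix n n K) (ζ : K) :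
    (A - scalar n ζ).det = (A.charpoly.roots.map (· - ζ)).prod := by
  calc (A - scalar n ζ).det = (-1) ^ A.charpoly.roots.card * (scalar n ζ - A).det := by
        rw [← neg_sub, det_neg, card_roots_charpoly]
    _ = (A.charpoly.roots.map (· - ζ)).prod := by
        rw [← eval_charpoly, (IsAlgClosed.splits _).eval_eq_prod_roots_of_monic A.charpoly_monic,
          ← Multiset.card_map (ζ - ·), ← Multiset.prod_map_neg, Multiset.map_map]
        simp

theorem det_aeval_eq_prod_roots_charpoly (A : Matrix n n K) (p : K[X]) :
    (aeval A p).det = (A.charpoly.roots.map p.eval).prod := by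
  -- `det ∘ aeval A` is multiplicative, so it suffices to check the linear factors of `p`.
  let detAeval : K[X] →* K := detMonoidHom.comp (aeval (R := K) A).toMonoidHom
  change detAeval p = _
  rw [(IsAlgClosed.splits p).eq_prod_roots]
  generalize p.leadingCoeff = a
  generalize p.roots = s
  have hC : detAeval (C a) = a ^ A.charpoly.roots.card := by
    simp [detAeval, card_roots_charpoly, algebraMap_eq_diagonal]
  have hX_sub_C (ζ : K) : detAeval (X - C ζ) = (A.charpoly.roots.map (· - ζ)).prod := by
    simpa [detAeval, algebraMap_eq_diagonal, Pi.algebraMap_def] using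
      det_sub_scalar_eq_prod_roots_charpoly A ζ
  simp only [map_mul, map_multiset_prod, Multiset.map_map, Function.comp_def, hC, hX_sub_C]
  rw [Multiset.prod_map_prod_map]
  simp [Multiset.prod_map_mul, eval_multiset_prod]

end Matrix

namespace Polynomial

theorem aroots_complex_map_conj (p : ℝ[X]) : (p.aroots ℂ).map conj = p.aroots ℂ := by
  have hconj : (p.map (algebraMap ℝ ℂ)).map conj = p.map (algebraMap ℝ ℂ) := by
    rw [map_map]
    congr 1
    ext x
    simp
  rw [aroots_def, ← (IsAlgClosed.splits _).roots_map, hconj]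

theorem aroots_complex_filter_im_eq_zero (p : ℝ[X]) :
    (p.aroots ℂ).filter (·.im = 0) = p.roots.map ((↑) : ℝ → ℂ) := by
  classical
  ext z
  rw [Multiset.count_filter]
  split_ifs with hz
  · obtain ⟨x, rfl⟩ : ∃ x : ℝ, (x : ℂ) = z := ⟨z.re, Complex.ext rfl hz.symm⟩
    rw [Multiset.count_map_eq_count' _ _ Complex.ofReal_injective, aroots_def, count_roots,
      count_roots, eq_rootMultiplicity_map (algebraMap ℝ ℂ).injective]
    rfl
  · refine (Multiset.count_eq_zero.mpr fun hz' => hz ?_).symm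
    obtain ⟨x, -, rfl⟩ := Multiset.mem_map.mp hz'
    exact Complex.ofReal_im x

theorem aroots_complex_eq_add (p : ℝ[X]) :
    p.aroots ℂ = p.roots.map ((↑) : ℝ → ℂ) + (p.aroots ℂ).filter (0 < ·.im) +
      ((p.aroots ℂ).filter (0 < ·.im)).map conj := by
  classical
  have hneg : ((p.aroots ℂ).filter (0 < ·.im)).map conj = (p.aroots ℂ).filter (·.im < 0) := by
    conv_rhs => rw [← aroots_complex_map_conj, Multiset.filter_map]
    simp
  rw [hneg, ← aroots_complex_filter_im_eq_zero]
  ext z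
  simp only [Multiset.count_add, Multiset.count_filter]
  rcases lt_trichotomy z.im 0 with h | h | h
  · simp [h, h.ne, h.not_gt]
  · simp [h]
  · simp [h, h.ne', h.not_gt]

theorem exists_prod_aroots_complex_aeval_eq (p q : ℝ[X]) :
    ∃ z : ℂ, ((p.aroots ℂ).map (aeval · q)).prod =
      ↑((p.roots.map q.eval).prod * Complex.normSq z) := by
  set z := (((p.aroots ℂ).filter (0 < ·.im)).map (aeval · q)).prod
  refine ⟨z, ?_⟩
  have hreal : ((p.roots.map ((↑) : ℝ → ℂ)).map (aeval · q)).prod =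
      ((p.roots.map q.eval).prod : ℂ) := by
    rw [← Complex.ofRealHom_eq_coe, map_multiset_prod, Multiset.map_map, Multiset.map_map]
    exact congrArg _ (Multiset.map_congr rfl fun x _ => (ofReal_eval q x).symm)
  have hconj : ((((p.aroots ℂ).filter (0 < ·.im)).map conj).map (aeval · q)).prod = conj z := by
    simp [z, Multiset.map_map, aeval_conj, map_multiset_prod]
  rw [aroots_complex_eq_add, Multiset.map_add, Multiset.map_add, Multiset.prod_add,
    Multiset.prod_add, hreal, hconj, mul_assoc, Complex.mul_conj, Complex.ofReal_mul]

end Polynomial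

theorem Matrix.exists_det_aeval_eq_prod_roots_charpoly_mul {n : Type*} [Fintype n]
    [DecidableEq n] (A : Matrix n n ℝ) (q : ℝ[X]) :
    ∃ c : ℝ, 0 ≤ c ∧ (aeval A q).det = (A.charpoly.roots.map q.eval).prod * c := by
  obtain ⟨z, hz⟩ := A.charpoly.exists_prod_aroots_complex_aeval_eq q
  refine ⟨Complex.normSq z, Complex.normSq_nonneg z, Complex.ofReal_injective ?_⟩
  have hmap : (aeval A q).map (algebraMap ℝ ℂ) =
      aeval (A.map (algebraMap ℝ ℂ)) (q.map (algebraMap ℝ ℂ)) := by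
    rw [aeval_map_algebraMap]
    exact (aeval_algHom_apply (AlgHom.mapMatrix (Algebra.ofId ℝ ℂ)) A q).symm
  rw [← hz, aroots_def, ← Matrix.charpoly_map, ← Complex.coe_algebraMap, RingHom.map_det,
    RingHom.mapMatrix_apply, hmap, Matrix.det_aeval_eq_prod_roots_charpoly]
  simp [eval_map_algebraMap]

open scoped Classical in
/-- If `f^d − Id` is invertible for all positive `d` and no real eigenvalue of `f`
equals `±1`, then with `m₁` the number of real eigenvalues in `(−∞,1)` and `m₂` the
number in `(−1,1)` (with multiplicity), `sign(det(f^d − Id)) = (−1)^{m₁}` for odd `d`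
and `(−1)^{m₂}` for even `d`. -/
theorem stmt_3 (N : ℕ) (f : Matrix (Fin N) (Fin N) ℝ)
    (hinv : ∀ d : ℕ, 0 < d → (f ^ d - 1).det ≠ 0)
    (havoid : ∀ x ∈ f.charpoly.roots, x ≠ 1 ∧ x ≠ -1)
    (m₁ m₂ : ℕ)
    (hm₁ : m₁ = Multiset.card (f.charpoly.roots.filter (fun x => x < 1)))
    (hm₂ : m₂ = Multiset.card (f.charpoly.roots.filter (fun x => -1 < x ∧ x < 1))) :
    ∀ d : ℕ, 0 < d →
      (Odd d → Real.sign ((f ^ d - 1).det) = (-1) ^ m₁) ∧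
      (Even d → Real.sign ((f ^ d - 1).det) = (-1) ^ m₂) := by
  intro d hd
  obtain ⟨c, hc0, hdet⟩ := f.exists_det_aeval_eq_prod_roots_charpoly_mul (X ^ d - 1)
  simp only [map_sub, map_pow, aeval_X, map_one, eval_sub, eval_pow, eval_X, eval_one] at hdet
  have hc : 0 < c := hc0.lt_of_ne <| by
    rintro rfl
    exact hinv d hd (by simpa using hdet)
  have hfactor : ∀ x ∈ f.charpoly.roots, x ^ d - 1 ≠ 0 := fun x hx => by
    rw [sub_ne_zero, Ne, pow_eq_one_iff_of_ne_zero hd.ne']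
    have := havoid x hx
    tauto
  have hsign : Real.sign (f ^ d - 1).det =
      (-1) ^ (f.charpoly.roots.filter (fun x => x ^ d - 1 < 0)).card := by
    rw [hdet, Real.sign_mul, Real.sign_of_pos hc, mul_one,
      Real.sign_multiset_prod_map _ _ hfactor]
  refine ⟨fun hodd => ?_, fun heven => ?_⟩
  · rw [hsign, hm₁, Multiset.filter_congr fun x _ => by rw [sub_neg, hodd.pow_lt_one_iff]]
  · rw [hsign, hm₂,
      Multiset.filter_congr fun x _ => by rw [sub_neg, heven.pow_lt_one_iff hd.ne']]
end

section
/- Let Q be an (n−2)×(n−2) real matrix with no eigenvalues on the imaginary axis iℝ. Then det(exp(Q)) = e^{tr(Q)} > 0; moreover, if c(Q) denotes the number of eigenvalues of Q (with multiplicity) having negative real part, then sign(det(exp(Q) − Id)) = (−1)^{c(Q)}. -/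
set_option maxHeartbeats 1000000
open Polynomial Matrix

lemma my_eval_charpoly {n : ℕ} (M : Matrix (Fin n) (Fin n) ℂ) (t : ℂ) :
    (M.charpoly).eval t = (t • (1 : Matrix (Fin n) (Fin n) ℂ) - M).det := by
  rw [Matrix.charpoly, ← Polynomial.coe_evalRingHom, RingHom.map_det]
  congr 1
  ext i j
  by_cases h : i = j
  · subst h; simp [charmatrix_apply_eq, Matrix.smul_apply, Matrix.one_apply]
  · simp [charmatrix_apply_ne _ _ _ h, Matrix.smul_apply, Matrix.one_apply, h]

lemma my_prod_map_neg (s : Multiset ℂ) (g : ℂ → ℂ) :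
    (s.map fun x => -g x).prod = (-1) ^ Multiset.card s * (s.map g).prod := by
  induction s using Multiset.induction_on with
  | empty => simp
  | cons a s ih => simp [ih]; ring

lemma my_prod_toList {α β : Type*} [CommMonoid β] (s : Multiset α) (f : α → β) :
    (s.map f).prod = (s.toList.map f).prod := by
  conv_lhs => rw [← Multiset.coe_toList s]
  rw [Multiset.map_coe, Multiset.prod_coe]

lemma my_det_aeval {n : ℕ} (A : Matrix (Fin n) (Fin n) ℂ) (p : ℂ[X]) :
    (Polynomial.aeval A p).det = ((A.charpoly.roots).map (fun μ => p.eval μ)).prod := by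
  have hcard : Multiset.card A.charpoly.roots = n := by
    have h1 := Polynomial.splits_iff_card_roots.mp (IsAlgClosed.splits A.charpoly)
    rw [h1, A.charpoly_natDegree_eq_dim, Fintype.card_fin]
  by_cases hp : p = 0
  · subst hp
    simp only [map_zero, Polynomial.eval_zero]
    rcases Nat.eq_zero_or_pos n with hn | hn
    · subst hn
      rw [Multiset.card_eq_zero.mp hcard]
      simp [Matrix.det_isEmpty]
    · have hne : A.charpoly.roots ≠ 0 := by
        intro h; rw [h] at hcard; simp at hcard; omega
      obtain ⟨μ, hμ⟩ := Multiset.exists_mem_of_ne_zero hne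
      rw [haveI : Nonempty (Fin n) := ⟨⟨0, hn⟩⟩; Matrix.det_zero]
      symm
      exact Multiset.prod_eq_zero (Multiset.mem_map.mpr ⟨μ, hμ, rfl⟩)
  · have hsp : p = C p.leadingCoeff * (p.roots.map fun a => X - C a).prod :=
      (IsAlgClosed.splits p).eq_prod_roots
    have hchar : A.charpoly = (A.charpoly.roots.map fun a => X - C a).prod :=
      (IsAlgClosed.splits A.charpoly).eq_prod_roots_of_monic
        A.charpoly_monic
    set c := p.leadingCoeff with hc
    have hdet1 : ∀ ν : ℂ, (A - ν • (1 : Matrix (Fin n) (Fin n) ℂ)).det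
        = (A.charpoly.roots.map fun μ => μ - ν).prod := by
      intro ν
      rw [show A - ν • (1 : Matrix (Fin n) (Fin n) ℂ) = -(ν • 1 - A) by rw [neg_sub],
        Matrix.det_neg, ← my_eval_charpoly, Fintype.card_fin]
      conv_lhs => rw [hchar]
      rw [Polynomial.eval_multiset_prod, Multiset.map_map]
      simp only [Function.comp, Polynomial.eval_sub, Polynomial.eval_X, Polynomial.eval_C]
      rw [show (fun μ => μ - ν) = (fun μ => -(ν - μ)) by funext μ; ring,
        my_prod_map_neg, hcard]
    have heval : ∀ μ : ℂ, p.eval μ = c * (p.roots.map fun ν => μ - ν).prod := by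
      intro μ
      conv_lhs => rw [hsp]
      rw [Polynomial.eval_mul, Polynomial.eval_C, Polynomial.eval_multiset_prod,
        Multiset.map_map]
      simp only [Function.comp, Polynomial.eval_sub, Polynomial.eval_X, Polynomial.eval_C]
    have hsp' : p = C c * ((p.roots.toList.map fun a => X - C a)).prod := by
      conv_lhs => rw [hsp]
      rw [my_prod_toList]
    conv_lhs => rw [hsp']
    rw [_root_.map_mul, Polynomial.aeval_C, _root_.map_list_prod, List.map_map]
    rw [Matrix.det_mul, ← Matrix.coe_detMonoidHom, _root_.map_list_prod, List.map_map]
    simp only [Matrix.coe_detMonoidHom, Function.comp_def, map_sub, Polynomial.aeval_X,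
      Polynomial.aeval_C, Algebra.algebraMap_eq_smul_one]
    rw [Matrix.det_smul, Matrix.det_one, mul_one, Fintype.card_fin]
    simp only [hdet1]
    conv_rhs => simp only [heval]
    rw [Multiset.prod_map_mul, Multiset.map_const', Multiset.prod_replicate, hcard]
    rw [← my_prod_toList]
    congr 1
    exact (Multiset.prod_map_prod_map _ _).symm

open Polynomial Matrix Filter Topology


lemma my_tendsto_list_prod (l : List ℂ) (F : ℕ → ℂ → ℂ) (g : ℂ → ℂ)
    (h : ∀ x ∈ l, Tendsto (fun N => F N x) atTop (𝓝 (g x))) :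
    Tendsto (fun N => (l.map (F N)).prod) atTop (𝓝 (l.map g).prod) := by
  induction l with
  | nil => simpa using tendsto_const_nhds
  | cons a l ih =>
    simp only [List.map_cons, List.prod_cons]
    exact (h a (by simp)).mul (ih fun x hx => h x (List.mem_cons_of_mem _ hx))


lemma my_det_exp_sub {n : ℕ} (A : Matrix (Fin n) (Fin n) ℂ) (z : ℂ) :
    (NormedSpace.exp A - z • 1).det
      = (A.charpoly.roots.map fun μ => Complex.exp μ - z).prod := by
  letI : SeminormedRing (Matrix (Fin n) (Fin n) ℂ) := Matrix.linftyOpSemiNormedRing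
  letI : NormedRing (Matrix (Fin n) (Fin n) ℂ) := Matrix.linftyOpNormedRing
  letI : NormedAlgebra ℂ (Matrix (Fin n) (Fin n) ℂ) := Matrix.linftyOpNormedAlgebra
  set pN : ℕ → ℂ[X] :=
    fun N => (∑ k ∈ Finset.range N, C ((k.factorial : ℂ))⁻¹ * X ^ k) - C z with hpN
  have haeval : ∀ N, Polynomial.aeval A (pN N)
      = (∑ k ∈ Finset.range N, ((k.factorial : ℂ))⁻¹ • A ^ k) - z • 1 := by
    intro N
    simp only [hpN, map_sub, map_sum, _root_.map_mul, Polynomial.aeval_C,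
      Polynomial.aeval_X_pow, Algebra.algebraMap_eq_smul_one]
    congr 1
    · refine Finset.sum_congr rfl fun k _ => ?_
      rw [smul_mul_assoc, one_mul]
  have heval : ∀ N (μ : ℂ), Polynomial.eval μ (pN N)
      = (∑ k ∈ Finset.range N, ((k.factorial : ℂ))⁻¹ • μ ^ k) - z := by
    intro N μ
    simp [hpN, Polynomial.eval_finset_sum, smul_eq_mul]
  have h1 : Tendsto (fun N => ((Polynomial.aeval A (pN N)).det)) atTop
      (𝓝 ((NormedSpace.exp A - z • 1).det)) := by
    have hs := (NormedSpace.exp_series_hasSum_exp' (𝕂 := ℂ) A).tendsto_sum_nat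
    have hts : Tendsto (fun N => (∑ k ∈ Finset.range N, ((k.factorial : ℂ))⁻¹ • A ^ k) - z • 1)
        atTop (𝓝 (NormedSpace.exp A - z • 1)) := hs.sub_const _
    have hdetc : Continuous fun M : Matrix (Fin n) (Fin n) ℂ => M.det :=
      Continuous.matrix_det continuous_id
    have := (hdetc.tendsto _).comp hts
    simpa only [Function.comp_def, haeval] using this
  have h2 : Tendsto (fun N => ((A.charpoly.roots).map (fun μ => Polynomial.eval μ (pN N))).prod)
      atTop (𝓝 ((A.charpoly.roots.map fun μ => Complex.exp μ - z).prod)) := by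
    simp only [my_prod_toList]
    apply my_tendsto_list_prod
    intro x hx
    have hs := (NormedSpace.exp_series_hasSum_exp' (𝕂 := ℂ) x).tendsto_sum_nat
    have : Tendsto (fun N => (∑ k ∈ Finset.range N, ((k.factorial : ℂ))⁻¹ • x ^ k) - z)
        atTop (𝓝 (NormedSpace.exp x - z)) := hs.sub_const _
    rw [← Complex.exp_eq_exp_ℂ] at this
    simpa only [heval] using this
  simp only [my_det_aeval] at h1
  exact tendsto_nhds_unique h1 h2

open scoped ComplexConjugate

lemma my_sign_aux : ∀ (N : ℕ) (R : Multiset ℂ), Multiset.card R = N →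
    (∀ μ ∈ R, μ.re ≠ 0) → R.map (starRingEnd ℂ) = R →
    ∃ r : ℝ, 0 < r ∧ (R.map fun μ => Complex.exp μ - 1).prod
      = (r : ℂ) * (-1) ^ Multiset.card (R.filter fun μ => μ.re < 0) := by
  intro N
  induction N using Nat.strong_induction_on with
  | _ N ih =>
    intro R hcard h0 hconj
    rcases Multiset.empty_or_exists_mem R with hR0 | ⟨μ, hμ⟩
    · subst hR0
      exact ⟨1, one_pos, by simp⟩
    · have hR : μ ::ₘ R.erase μ = R := Multiset.cons_erase hμ
      set S := R.erase μ with hSdef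
      by_cases him : μ.im = 0
      · -- real eigenvalue
        have hconjμ : conj μ = μ := Complex.conj_eq_iff_im.mpr him
        have hconjS : S.map (starRingEnd ℂ) = S := by
          have h2 := hconj
          rw [← hR, Multiset.map_cons, hconjμ] at h2
          exact (Multiset.cons_inj_right μ).mp h2
        have h0S : ∀ ν ∈ S, ν.re ≠ 0 := fun ν hν => h0 ν (Multiset.mem_of_mem_erase hν)
        have hcS : Multiset.card S < N := by
          rw [← hcard, ← hR]; simp
        obtain ⟨r', hr', hS⟩ := ih _ hcS S rfl h0S hconjS
        have hμeq : μ = (μ.re : ℂ) := Complex.ext rfl (by simp [him])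
        have hexp : Complex.exp μ - 1 = ((Real.exp μ.re - 1 : ℝ) : ℂ) := by
          conv_lhs => rw [hμeq]
          push_cast [← Complex.ofReal_exp]
          ring
        have hprod : (R.map fun ν => Complex.exp ν - 1).prod
            = ((Real.exp μ.re - 1 : ℝ) : ℂ) * (S.map fun ν => Complex.exp ν - 1).prod := by
          rw [← hR, Multiset.map_cons, Multiset.prod_cons, hexp]
        have hfilt : (R.filter fun ν => ν.re < 0)
            = (if μ.re < 0 then {μ} else 0) + (S.filter fun ν => ν.re < 0) := by
          rw [← hR, Multiset.filter_cons]
        rcases lt_or_gt_of_ne (h0 μ hμ) with hneg | hpos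
        · refine ⟨(1 - Real.exp μ.re) * r',
            mul_pos (sub_pos.mpr (Real.exp_lt_one_iff.mpr hneg)) hr', ?_⟩
          rw [hprod, hS, hfilt, if_pos hneg]
          simp only [Multiset.card_add, Multiset.card_singleton]
          push_cast
          ring
        · refine ⟨(Real.exp μ.re - 1) * r',
            mul_pos (sub_pos.mpr (Real.one_lt_exp_iff.mpr hpos)) hr', ?_⟩
          rw [hprod, hS, hfilt, if_neg (not_lt.mpr hpos.le)]
          simp only [Multiset.card_add, Multiset.card_zero, zero_add]
          push_cast
          ring
      · -- complex eigenvalue, pairs with conjugate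
        have hconjμmem : conj μ ∈ R := by
          rw [← hconj]
          exact Multiset.mem_map_of_mem _ hμ
        have hne : conj μ ≠ μ := fun h => him (Complex.conj_eq_iff_im.mp h)
        have hmemS : conj μ ∈ S := (Multiset.mem_erase_of_ne hne).mpr hconjμmem
        set T := S.erase (conj μ) with hTdef
        have hR2 : μ ::ₘ conj μ ::ₘ T = R := by rw [Multiset.cons_erase hmemS, hR]
        have hconjT : T.map (starRingEnd ℂ) = T := by
          have h2 := hconj
          conv_lhs at h2 => rw [← hR2]
          rw [Multiset.map_cons, Multiset.map_cons, Complex.conj_conj, Multiset.cons_swap,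
            ← hR2] at h2
          exact (Multiset.cons_inj_right _).mp ((Multiset.cons_inj_right _).mp h2)
        have h0T : ∀ ν ∈ T, ν.re ≠ 0 := fun ν hν =>
          h0 ν (Multiset.mem_of_mem_erase (Multiset.mem_of_mem_erase hν))
        have hcT : Multiset.card T < N := by
          rw [← hcard, ← hR2]; simp only [Multiset.card_cons]; omega
        obtain ⟨r', hr', hTprod⟩ := ih _ hcT T rfl h0T hconjT
        set w := Complex.exp μ - 1 with hw
        have hw0 : w ≠ 0 := by
          intro h
          apply h0 μ hμ
          have hexp1 : Complex.exp μ = 1 := by rwa [sub_eq_zero] at h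
          have habs := congrArg (‖·‖) hexp1
          rw [Complex.norm_exp, norm_one] at habs
          exact (Real.exp_eq_one_iff _).mp habs
        have hpair : Complex.exp (conj μ) - 1 = conj w := by
          rw [hw, _root_.map_sub, Complex.exp_conj, _root_.map_one]
        have hprod : (R.map fun ν => Complex.exp ν - 1).prod
            = ((Complex.normSq w : ℝ) : ℂ) * (T.map fun ν => Complex.exp ν - 1).prod := by
          rw [← hR2, Multiset.map_cons, Multiset.map_cons, Multiset.prod_cons,
            Multiset.prod_cons, hpair, ← hw, ← mul_assoc, Complex.mul_conj]
        have hfilt : Multiset.card (R.filter fun ν => ν.re < 0)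
            = Multiset.card (T.filter fun ν => ν.re < 0) + (if μ.re < 0 then 2 else 0) := by
          rw [← hR2, Multiset.filter_cons, Multiset.filter_cons]
          have hre : (conj μ).re = μ.re := Complex.conj_re μ
          by_cases hlt : μ.re < 0 <;>
            simp [hre, hlt, Multiset.card_add] <;> omega
        refine ⟨Complex.normSq w * r', mul_pos (Complex.normSq_pos.mpr hw0) hr', ?_⟩
        rw [hprod, hTprod, hfilt]
        by_cases hlt : μ.re < 0
        · rw [if_pos hlt]; push_cast; ring
        · rw [if_neg hlt]; push_cast; ring

open Polynomial Matrix Filter Topology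
open scoped ComplexConjugate

lemma my_prod_exp (s : Multiset ℂ) : (s.map Complex.exp).prod = Complex.exp s.sum := by
  induction s using Multiset.induction_on with
  | empty => simp
  | cons a s ih => simp [Multiset.prod_cons, ih, Complex.exp_add]

lemma my_roots_conj (p : ℝ[X]) :
    ((p.map (algebraMap ℝ ℂ)).roots).map (starRingEnd ℂ) = (p.map (algebraMap ℝ ℂ)).roots := by
  have hmap : (p.map (algebraMap ℝ ℂ)).map (starRingEnd ℂ) = p.map (algebraMap ℝ ℂ) := by
    ext n
    simp [Polynomial.coeff_map, Complex.conj_ofReal]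
  calc (p.map (algebraMap ℝ ℂ)).roots.map (starRingEnd ℂ)
      = ((p.map (algebraMap ℝ ℂ)).map (starRingEnd ℂ)).roots :=
        ((IsAlgClosed.splits _).roots_map _).symm
    _ = _ := by rw [hmap]

lemma my_trace_map {m : ℕ} (Q : Matrix (Fin m) (Fin m) ℝ) :
    (Q.map (algebraMap ℝ ℂ)).trace = (Q.trace : ℂ) := by
  simp [Matrix.trace, Matrix.map_apply, Matrix.diag]

lemma my_exp_map {m : ℕ} (Q : Matrix (Fin m) (Fin m) ℝ) :
    (NormedSpace.exp Q).map (algebraMap ℝ ℂ) = NormedSpace.exp (Q.map (algebraMap ℝ ℂ)) := by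
  letI : SeminormedRing (Matrix (Fin m) (Fin m) ℝ) := Matrix.linftyOpSemiNormedRing
  letI : NormedRing (Matrix (Fin m) (Fin m) ℝ) := Matrix.linftyOpNormedRing
  letI : NormedAlgebra ℝ (Matrix (Fin m) (Fin m) ℝ) := Matrix.linftyOpNormedAlgebra
  letI : NormedAlgebra ℚ (Matrix (Fin m) (Fin m) ℝ) := .restrictScalars ℚ ℝ _
  letI : SeminormedRing (Matrix (Fin m) (Fin m) ℂ) := Matrix.linftyOpSemiNormedRing
  letI : NormedRing (Matrix (Fin m) (Fin m) ℂ) := Matrix.linftyOpNormedRing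
  letI : NormedAlgebra ℝ (Matrix (Fin m) (Fin m) ℂ) := Matrix.linftyOpNormedAlgebra
  letI : NormedAlgebra ℂ (Matrix (Fin m) (Fin m) ℂ) := Matrix.linftyOpNormedAlgebra
  have hcont : Continuous ((algebraMap ℝ ℂ).mapMatrix :
      Matrix (Fin m) (Fin m) ℝ →+* Matrix (Fin m) (Fin m) ℂ) := by
    have : Continuous fun M : Matrix (Fin m) (Fin m) ℝ => M.map (algebraMap ℝ ℂ) :=
      continuous_id.matrix_map (continuous_algebraMap ℝ ℂ)
    exact this
  have h1 := NormedSpace.map_exp ((algebraMap ℝ ℂ).mapMatrix :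
      Matrix (Fin m) (Fin m) ℝ →+* Matrix (Fin m) (Fin m) ℂ) hcont Q
  rw [RingHom.mapMatrix_apply, RingHom.mapMatrix_apply] at h1
  exact h1

open Polynomial Matrix Filter Topology
open scoped ComplexConjugate

open scoped Classical in
/-- For a real matrix `Q` with no eigenvalues on the imaginary axis:
`det(exp Q) = e^{tr Q} > 0`, and if `c(Q)` is the number of eigenvalues of `Q` with
negative real part (with multiplicity), then `sign(det(exp Q − Id)) = (−1)^{c(Q)}`. -/
theorem stmt_15 (m : ℕ) (Q : Matrix (Fin m) (Fin m) ℝ)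
    (hQ : ∀ μ ∈ (Q.charpoly.map (algebraMap ℝ ℂ)).roots, μ.re ≠ 0)
    (cQ : ℕ)
    (hcQ : cQ = Multiset.card
      (((Q.charpoly.map (algebraMap ℝ ℂ)).roots).filter (fun μ => μ.re < 0))) :
    (NormedSpace.exp Q).det = Real.exp Q.trace ∧
    0 < (NormedSpace.exp Q).det ∧
    Real.sign ((NormedSpace.exp Q - 1).det) = (-1) ^ cQ := by
  set Qc := Q.map (algebraMap ℝ ℂ) with hQc
  have hchar : Qc.charpoly = Q.charpoly.map (algebraMap ℝ ℂ) := Q.charpoly_map _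
  set R := Qc.charpoly.roots with hRdef
  have hR_eq : R = (Q.charpoly.map (algebraMap ℝ ℂ)).roots := by rw [hRdef, hchar]
  -- determinant of exp Q
  have hdet0 : (NormedSpace.exp Qc).det = (R.map fun μ => Complex.exp μ).prod := by
    have h := my_det_exp_sub Qc 0
    simpa using h
  have hdet_exp_c : (((NormedSpace.exp Q).det : ℝ) : ℂ) = Complex.exp (Q.trace : ℂ) := by
    have h1 : ((algebraMap ℝ ℂ) (NormedSpace.exp Q).det)
        = ((algebraMap ℝ ℂ).mapMatrix (NormedSpace.exp Q)).det :=
      RingHom.map_det _ _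
    rw [Complex.coe_algebraMap] at h1
    rw [h1, RingHom.mapMatrix_apply, my_exp_map, ← hQc, hdet0, my_prod_exp,
      ← Matrix.trace_eq_sum_roots_charpoly, my_trace_map]
  have part1 : (NormedSpace.exp Q).det = Real.exp Q.trace := by
    have : (((NormedSpace.exp Q).det : ℝ) : ℂ) = ((Real.exp Q.trace : ℝ) : ℂ) := by
      rw [hdet_exp_c, Complex.ofReal_exp]
    exact_mod_cast this
  refine ⟨part1, by rw [part1]; exact Real.exp_pos _, ?_⟩
  -- sign of det (exp Q - 1)
  set d := (NormedSpace.exp Q - 1).det with hd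
  have hdC : ((d : ℝ) : ℂ) = (R.map fun μ => Complex.exp μ - 1).prod := by
    have h1 : ((algebraMap ℝ ℂ) d)
        = ((algebraMap ℝ ℂ).mapMatrix (NormedSpace.exp Q - 1)).det :=
      RingHom.map_det _ _
    rw [Complex.coe_algebraMap] at h1
    rw [h1, _root_.map_sub, _root_.map_one, RingHom.mapMatrix_apply, my_exp_map, ← hQc]
    have h2 := my_det_exp_sub Qc 1
    rw [one_smul] at h2
    rw [h2]
  have h0 : ∀ μ ∈ R, μ.re ≠ 0 := by
    intro μ hμ; exact hQ μ (by rwa [← hR_eq])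
  have hconjR : R.map (starRingEnd ℂ) = R := by
    rw [hR_eq]; exact my_roots_conj Q.charpoly
  obtain ⟨r, hr, heq⟩ := my_sign_aux (Multiset.card R) R rfl h0 hconjR
  have hcQ' : cQ = Multiset.card (R.filter fun μ => μ.re < 0) := by rw [hcQ, hR_eq]
  have hd2 : d = r * (-1) ^ cQ := by
    have : ((d : ℝ) : ℂ) = (((r * (-1) ^ cQ : ℝ)) : ℂ) := by
      rw [hdC, heq, ← hcQ']; push_cast; ring
    exact_mod_cast this
  rcases Nat.even_or_odd cQ with hev | hod
  · rw [hd2, hev.neg_one_pow, mul_one]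
    exact Real.sign_of_pos hr
  · rw [hd2, hod.neg_one_pow, mul_neg_one]
    exact Real.sign_of_neg (by linarith)
end
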